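/- If n and n' are any two comultiplications on a space X, then λ' ∘ (Σn) ≃ ν ≃ λ' ∘ (Σn') : ΣX → ΣX ∨ ΣX, and hence Σn ≃ Σn'. -/

import Mathlib

open ContinuousMap unitInterval

/-- The relation generating the reduced suspension of `(X, x₀)`:
collapse `X × {0}`, `X × {1}` and `{x₀} × I`. -/
inductive SuspRel (X : Type*) (x₀ : X) : X × I → X × I → Prop
  | zero (x y : X) : SuspRel X x₀ (x, 0) (y, 0)
  | one (x y : X) : SuspRel X x₀ (x, 1) (y, 1)
  | base (t : I) : SuspRel X x₀ (x₀, t) (x₀, 0)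

/-- The reduced suspension `ΣX`. -/
def Susp (X : Type*) [TopologicalSpace X] (x₀ : X) : Type _ := Quot (SuspRel X x₀)

instance {X : Type*} [TopologicalSpace X] (x₀ : X) : TopologicalSpace (Susp X x₀) :=
  inferInstanceAs (TopologicalSpace (Quot (SuspRel X x₀)))

/-- Points of the suspension. -/
def Susp.mk {X : Type*} [TopologicalSpace X] (x₀ : X) (x : X) (t : I) : Susp X x₀ :=
  Quot.mk _ (x, t)

/-- The basepoint of the suspension. -/
def Susp.pt {X : Type*} [TopologicalSpace X] (x₀ : X) : Susp X x₀ := Susp.mk x₀ x₀ 0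

/-- Clamp a real number into the unit interval. -/
noncomputable def toI (r : ℝ) : I := Set.projIcc 0 1 zero_le_one r
open ContinuousMap

/-- The wedge `X ∨ B`, modeled as the subspace `(X × {b₀}) ∪ ({x₀} × B)` of `X × B`. -/
def Wedge (X B : Type*) [TopologicalSpace X] [TopologicalSpace B] (x₀ : X) (b₀ : B) :=
  {z : X × B // z.1 = x₀ ∨ z.2 = b₀}

variable {X B : Type*} [TopologicalSpace X] [TopologicalSpace B] {x₀ : X} {b₀ : B}

instance : TopologicalSpace (Wedge X B x₀ b₀) :=
  inferInstanceAs (TopologicalSpace {z : X × B // z.1 = x₀ ∨ z.2 = b₀})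

namespace Wedge

/-- The basepoint of the wedge. -/
def pt : Wedge X B x₀ b₀ := ⟨(x₀, b₀), Or.inl rfl⟩

/-- Inclusion of the first wedge summand. -/
def inl : C(X, Wedge X B x₀ b₀) :=
  ⟨fun x => ⟨(x, b₀), Or.inr rfl⟩, by fun_prop⟩

/-- Inclusion of the second wedge summand. -/
def inr : C(B, Wedge X B x₀ b₀) :=
  ⟨fun b => ⟨(x₀, b), Or.inl rfl⟩, by fun_prop⟩

/-- Projection of the wedge onto the first summand (collapse `B`). -/
def p₁ : C(Wedge X B x₀ b₀, X) := ⟨fun z => z.1.1, by fun_prop⟩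

/-- Projection of the wedge onto the second summand (collapse `X`). -/
def p₂ : C(Wedge X B x₀ b₀, B) := ⟨fun z => z.1.2, by fun_prop⟩

/-- Inclusion of the wedge into the product. -/
def J : C(Wedge X B x₀ b₀, X × B) := ⟨Subtype.val, continuous_subtype_val⟩

end Wedge

/-- `(X, n)` is a co-H-space (comultiplication with both projections homotopic to
the identity, relative to the basepoint). -/
def IsComul {X : Type*} [TopologicalSpace X] (x₀ : X) (n : C(X, Wedge X X x₀ x₀)) : Prop :=
  (Wedge.p₁.comp n).HomotopicRel (ContinuousMap.id X) {x₀} ∧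
  (Wedge.p₂.comp n).HomotopicRel (ContinuousMap.id X) {x₀}

/-! ### Auxiliary lemmas -/

section SuspAux

variable {X' : Type*} [TopologicalSpace X'] {x₀' : X'}

theorem Susp.mk_zero (x : X') : Susp.mk x₀' x 0 = Susp.pt x₀' :=
  Quot.sound (SuspRel.zero x x₀')

theorem Susp.base_eq (t : I) : Susp.mk x₀' x₀' t = Susp.pt x₀' :=
  Quot.sound (SuspRel.base t)

theorem Susp.mk_one (x : X') : Susp.mk x₀' x 1 = Susp.pt x₀' :=
  (Quot.sound (SuspRel.one x x₀')).trans (Susp.base_eq 1)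

theorem Susp.indOn {motive : Susp X' x₀' → Prop} (z : Susp X' x₀')
    (h : ∀ x t, motive (Susp.mk x₀' x t)) : motive z :=
  Quot.ind (fun p => by obtain ⟨x, t⟩ := p; exact h x t) z

theorem Susp.ind {motive : Susp X' x₀' → Prop}
    (h : ∀ x t, motive (Susp.mk x₀' x t)) : ∀ z, motive z :=
  fun z => Susp.indOn z h

theorem toI_continuous : Continuous toI :=
  show Continuous fun r => Set.projIcc (0:ℝ) 1 zero_le_one r from continuous_projIcc

theorem toI_coe (t : I) : toI (t : ℝ) = t := Set.projIcc_val zero_le_one t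

theorem toI_nonpos {r : ℝ} (h : r ≤ 0) : toI r = 0 := by
  rw [toI, Set.projIcc_of_le_left _ h]; rfl

theorem toI_ge_one {r : ℝ} (h : 1 ≤ r) : toI r = 1 := by
  rw [toI, Set.projIcc_of_right_le _ h]; rfl

theorem Susp.continuous_mk {α : Type*} [TopologicalSpace α] {f : α → X'} {g : α → I}
    (hf : Continuous f) (hg : Continuous g) :
    Continuous fun a => Susp.mk x₀' (f a) (g a) :=
  continuous_quot_mk.comp (hf.prodMk hg)

/-- Functoriality of the suspension. -/
def Susp.mapC {Y : Type*} [TopologicalSpace Y] {y₀ : Y} (f : C(X', Y)) (hf : f x₀' = y₀) :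
    C(Susp X' x₀', Susp Y y₀) where
  toFun := Quot.lift (fun p => Susp.mk y₀ (f p.1) p.2) (by
    intro a b r
    cases r with
    | zero x y => exact (Susp.mk_zero _).trans (Susp.mk_zero _).symm
    | one x y => exact (Susp.mk_one _).trans (Susp.mk_one _).symm
    | base t =>
        show Susp.mk y₀ (f x₀') t = Susp.mk y₀ (f x₀') 0
        rw [hf]
        exact (Susp.base_eq t).trans (Susp.mk_zero _).symm)
  continuous_toFun := continuous_quot_lift _
    (Susp.continuous_mk (f.continuous.comp continuous_fst) continuous_snd)

theorem Susp.mapC_mk {Y : Type*} [TopologicalSpace Y] {y₀ : Y} (f : C(X', Y)) (hf : f x₀' = y₀)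
    (x : X') (t : I) : Susp.mapC f hf (Susp.mk x₀' x t) = Susp.mk y₀ (f x) t := rfl

end SuspAux

/-! ### More auxiliary constructions -/

section WedgeAux

variable {X' B' : Type*} [TopologicalSpace X'] [TopologicalSpace B'] {x₀' : X'} {b₀' : B'}

theorem Wedge.eq_inl (w : Wedge X' B' x₀' b₀') (h : w.1.2 = b₀') : w = Wedge.inl w.1.1 :=
  Subtype.ext (Prod.ext rfl h)

theorem Wedge.eq_inr (w : Wedge X' B' x₀' b₀') (h : w.1.1 = x₀') : w = Wedge.inr w.1.2 :=
  Subtype.ext (Prod.ext h rfl)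

theorem Wedge.pt_eq_inl : (Wedge.pt : Wedge X' B' x₀' b₀') = Wedge.inl x₀' := rfl

theorem Wedge.pt_eq_inr : (Wedge.pt : Wedge X' B' x₀' b₀') = Wedge.inr b₀' := rfl

end WedgeAux

section MainAux

variable {X : Type*} [TopologicalSpace X] (x₀ : X)

/-- Build a continuous map into the wedge of two suspensions out of a pair of maps. -/
def wedgeMkC {α : Type*} [TopologicalSpace α] {c₁ c₂ : α → Susp X x₀}
    (h₁ : Continuous c₁) (h₂ : Continuous c₂)
    (h : ∀ a, c₁ a = Susp.pt x₀ ∨ c₂ a = Susp.pt x₀) :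
    C(α, Wedge (Susp X x₀) (Susp X x₀) (Susp.pt x₀) (Susp.pt x₀)) :=
  ⟨fun a => ⟨(c₁ a, c₂ a), h a⟩, (h₁.prodMk h₂).subtype_mk _⟩

theorem wedgeMkC_apply {α : Type*} [TopologicalSpace α] {c₁ c₂ : α → Susp X x₀}
    (h₁ : Continuous c₁) (h₂ : Continuous c₂)
    (h : ∀ a, c₁ a = Susp.pt x₀ ∨ c₂ a = Susp.pt x₀) (a : α) :
    wedgeMkC x₀ h₁ h₂ h a = ⟨(c₁ a, c₂ a), h a⟩ := rfl

/-- Build a map `I × ΣX → β` from a map `(X × I) × I → β` which descends. -/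
def suspHomotopyMap {β : Type*} [TopologicalSpace β] (k : C((X × I) × I, β))
    (hk : ∀ (p q : X × I) (s : I), SuspRel X x₀ p q → k (p, s) = k (q, s)) :
    C(I × Susp X x₀, β) :=
  (ContinuousMap.uncurry
    ⟨Quot.lift (fun p => k.curry p) (fun p q r => ContinuousMap.ext fun s => hk p q s r),
     continuous_quot_lift _ k.curry.continuous⟩).comp
    ⟨Prod.swap, continuous_swap⟩

theorem suspHomotopyMap_apply {β : Type*} [TopologicalSpace β] (k : C((X × I) × I, β))
    (hk : ∀ (p q : X × I) (s : I), SuspRel X x₀ p q → k (p, s) = k (q, s)) (s : I) (x : X)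
    (t : I) : suspHomotopyMap x₀ k hk (s, Susp.mk x₀ x t) = k ((x, t), s) := by
  simp [suspHomotopyMap, ContinuousMap.uncurry, Function.uncurry, Susp.mk]
  rfl

/-- Suspension of the left inclusion. -/
def Si1 : C(Susp X x₀, Susp (Wedge X X x₀ x₀) Wedge.pt) :=
  Susp.mapC Wedge.inl rfl

/-- Suspension of the right inclusion. -/
def Si2 : C(Susp X x₀, Susp (Wedge X X x₀ x₀) Wedge.pt) :=
  Susp.mapC Wedge.inr rfl

theorem Si1_mk (x : X) (t : I) :
    Si1 x₀ (Susp.mk x₀ x t) = Susp.mk Wedge.pt (Wedge.inl x) t := rfl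

theorem Si2_mk (x : X) (t : I) :
    Si2 x₀ (Susp.mk x₀ x t) = Susp.mk Wedge.pt (Wedge.inr x) t := rfl

theorem Si1_pt : Si1 x₀ (Susp.pt x₀) = Susp.pt (Wedge.pt : Wedge X X x₀ x₀) := rfl

theorem Si2_pt : Si2 x₀ (Susp.pt x₀) = Susp.pt (Wedge.pt : Wedge X X x₀ x₀) := rfl

open scoped Classical in
/-- The underlying function of the fold/inverse map `ΣX ∨ ΣX → Σ(X ∨ X)`. -/
noncomputable def rhoFun
    (z : Wedge (Susp X x₀) (Susp X x₀) (Susp.pt x₀) (Susp.pt x₀)) :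
    Susp (Wedge X X x₀ x₀) Wedge.pt :=
  if z.1.2 = Susp.pt x₀ then Si1 x₀ z.1.1 else Si2 x₀ z.1.2

/-- The canonical continuous map `ΣX ∨ ΣX → Σ(X ∨ X)`, inverse to `λ'`. -/
noncomputable def rho :
    C(Wedge (Susp X x₀) (Susp X x₀) (Susp.pt x₀) (Susp.pt x₀),
      Susp (Wedge X X x₀ x₀) Wedge.pt) := by
  refine ⟨rhoFun x₀, ?_⟩
  rw [continuous_def]
  intro U hU
  have hA : IsOpen {z : Wedge (Susp X x₀) (Susp X x₀) (Susp.pt x₀) (Susp.pt x₀) |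
      Si1 x₀ z.1.1 ∈ U} :=
    IsOpen.preimage ((Si1 x₀).continuous.comp (continuous_fst.comp continuous_subtype_val)) hU
  have hB : IsOpen {z : Wedge (Susp X x₀) (Susp X x₀) (Susp.pt x₀) (Susp.pt x₀) |
      Si2 x₀ z.1.2 ∈ U} :=
    IsOpen.preimage ((Si2 x₀).continuous.comp (continuous_snd.comp continuous_subtype_val)) hU
  by_cases hpt : Susp.pt (Wedge.pt : Wedge X X x₀ x₀) ∈ U
  · have he : rhoFun x₀ ⁻¹' U = {z | Si1 x₀ z.1.1 ∈ U} ∩ {z | Si2 x₀ z.1.2 ∈ U} := by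
      ext z
      obtain ⟨⟨u, v⟩, hz⟩ := z
      by_cases hv : v = Susp.pt x₀
      · subst hv
        refine (iff_of_eq (congrArg (· ∈ U) (if_pos rfl : rhoFun x₀ (⟨(u, Susp.pt x₀), hz⟩ : {z : Susp X x₀ × Susp X x₀ // z.1 = Susp.pt x₀ ∨ z.2 = Susp.pt x₀}) = Si1 x₀ u))).trans ?_
        show Si1 x₀ u ∈ U ↔ Si1 x₀ u ∈ U ∧ Si2 x₀ (Susp.pt x₀) ∈ U
        rw [Si2_pt]
        exact ⟨fun h => ⟨h, hpt⟩, fun h => h.1⟩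
      · have hu : u = Susp.pt x₀ := hz.resolve_right hv
        subst hu
        refine (iff_of_eq (congrArg (· ∈ U) (if_neg hv : rhoFun x₀ (⟨(Susp.pt x₀, v), hz⟩ : {z : Susp X x₀ × Susp X x₀ // z.1 = Susp.pt x₀ ∨ z.2 = Susp.pt x₀}) = Si2 x₀ v))).trans ?_
        show Si2 x₀ v ∈ U ↔ Si1 x₀ (Susp.pt x₀) ∈ U ∧ Si2 x₀ v ∈ U
        rw [Si1_pt]
        exact ⟨fun h => ⟨hpt, h⟩, fun h => h.2⟩
    rw [he]
    exact hA.inter hB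
  · have he : rhoFun x₀ ⁻¹' U = {z | Si1 x₀ z.1.1 ∈ U} ∪ {z | Si2 x₀ z.1.2 ∈ U} := by
      ext z
      obtain ⟨⟨u, v⟩, hz⟩ := z
      by_cases hv : v = Susp.pt x₀
      · subst hv
        refine (iff_of_eq (congrArg (· ∈ U) (if_pos rfl : rhoFun x₀ (⟨(u, Susp.pt x₀), hz⟩ : {z : Susp X x₀ × Susp X x₀ // z.1 = Susp.pt x₀ ∨ z.2 = Susp.pt x₀}) = Si1 x₀ u))).trans ?_
        show Si1 x₀ u ∈ U ↔ Si1 x₀ u ∈ U ∨ Si2 x₀ (Susp.pt x₀) ∈ U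
        rw [Si2_pt]
        exact ⟨fun h => Or.inl h, fun h => h.resolve_right hpt⟩
      · have hu : u = Susp.pt x₀ := hz.resolve_right hv
        subst hu
        refine (iff_of_eq (congrArg (· ∈ U) (if_neg hv : rhoFun x₀ (⟨(Susp.pt x₀, v), hz⟩ : {z : Susp X x₀ × Susp X x₀ // z.1 = Susp.pt x₀ ∨ z.2 = Susp.pt x₀}) = Si2 x₀ v))).trans ?_
        show Si2 x₀ v ∈ U ↔ Si1 x₀ (Susp.pt x₀) ∈ U ∨ Si2 x₀ v ∈ U
        rw [Si1_pt]
        exact ⟨fun h => Or.inr h, fun h => h.resolve_left hpt⟩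
    rw [he]
    exact hA.union hB

theorem rho_inl (u : Susp X x₀) : rho x₀ (Wedge.inl u) = Si1 x₀ u := if_pos rfl

theorem rho_inr (v : Susp X x₀) : rho x₀ (Wedge.inr v) = Si2 x₀ v := by
  show rhoFun x₀ (Wedge.inr v) = Si2 x₀ v
  rw [rhoFun]
  by_cases hv : v = Susp.pt x₀
  · have h1 : (Wedge.inr v : Wedge (Susp X x₀) (Susp X x₀) (Susp.pt x₀) (Susp.pt x₀)).1.2 = v :=
      rfl
    rw [h1, if_pos hv, hv]
    rw [Si2_pt]
    exact (Si1_pt x₀).symm ▸ rfl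
  · have h1 : (Wedge.inr v : Wedge (Susp X x₀) (Susp X x₀) (Susp.pt x₀) (Susp.pt x₀)).1.2 = v :=
      rfl
    rw [h1, if_neg hv]

end MainAux

/-! ### The main homotopy: `λ' ∘ Σn ≃ ν` for any comultiplication `n`. -/

theorem comul_susp_homotopy {X : Type*} [TopologicalSpace X] (x₀ : X)
    (n : C(X, Wedge X X x₀ x₀)) (hn : IsComul x₀ n)
    (Sn : C(Susp X x₀, Susp (Wedge X X x₀ x₀) Wedge.pt))
    (hSn : ∀ (x : X) (t : I), Sn (Susp.mk x₀ x t) = Susp.mk Wedge.pt (n x) t)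
    (lam : C(Susp (Wedge X X x₀ x₀) Wedge.pt,
      Wedge (Susp X x₀) (Susp X x₀) (Susp.pt x₀) (Susp.pt x₀)))
    (hlam₁ : ∀ (x : X) (t : I),
      lam (Susp.mk Wedge.pt (Wedge.inl x) t) = Wedge.inl (Susp.mk x₀ x t))
    (hlam₂ : ∀ (x : X) (t : I),
      lam (Susp.mk Wedge.pt (Wedge.inr x) t) = Wedge.inr (Susp.mk x₀ x t))
    (ν : C(Susp X x₀, Wedge (Susp X x₀) (Susp X x₀) (Susp.pt x₀) (Susp.pt x₀)))
    (hν : ∀ (x : X) (t : I), ν (Susp.mk x₀ x t) =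
      if (t : ℝ) ≤ 1 / 2 then Wedge.inl (Susp.mk x₀ x (toI (2 * (t : ℝ))))
      else Wedge.inr (Susp.mk x₀ x (toI (2 * (t : ℝ) - 1)))) :
    (lam.comp Sn).HomotopicRel ν {Susp.pt x₀} := by
  obtain ⟨H₁⟩ := hn.1
  obtain ⟨H₂⟩ := hn.2
  have hmem : x₀ ∈ ({x₀} : Set X) := rfl
  have c0 : ((0 : I) : ℝ) = 0 := rfl
  have c1 : ((1 : I) : ℝ) = 1 := rfl
  have hH1 : ∀ s : I, H₁ (s, x₀) = x₀ := fun s => H₁.eq_snd s hmem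
  have hH2 : ∀ s : I, H₂ (s, x₀) = x₀ := fun s => H₂.eq_snd s hmem
  have hn1x₀ : (n x₀).1.1 = x₀ := (H₁.eq_fst 0 hmem).symm.trans (H₁.eq_snd 0 hmem)
  have hn2x₀ : (n x₀).1.2 = x₀ := (H₂.eq_fst 0 hmem).symm.trans (H₂.eq_snd 0 hmem)
  have hz : ∀ (w : X) (r : ℝ), r ≤ 0 → Susp.mk x₀ w (toI r) = Susp.pt x₀ := fun w r hr => by
    rw [toI_nonpos hr]; exact Susp.mk_zero w
  have ho : ∀ (w : X) (r : ℝ), 1 ≤ r → Susp.mk x₀ w (toI r) = Susp.pt x₀ := fun w r hr => by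
    rw [toI_ge_one hr]; exact Susp.mk_one w
  -- the two formulas for `lam ∘ Sn`
  have hcase1 : ∀ (x : X) (t : I), (n x).1.2 = x₀ →
      (lam.comp Sn) (Susp.mk x₀ x t) = Wedge.inl (Susp.mk x₀ (n x).1.1 t) := by
    intro x t h
    have hw : n x = Wedge.inl (n x).1.1 := Wedge.eq_inl _ h
    conv_lhs => rw [ContinuousMap.comp_apply, hSn, hw, hlam₁]
  have hcase2 : ∀ (x : X) (t : I), (n x).1.1 = x₀ →
      (lam.comp Sn) (Susp.mk x₀ x t) = Wedge.inr (Susp.mk x₀ (n x).1.2 t) := by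
    intro x t h
    have hw : n x = Wedge.inr (n x).1.2 := Wedge.eq_inr _ h
    conv_lhs => rw [ContinuousMap.comp_apply, hSn, hw, hlam₂]
  -- the homotopy `A` from `lam ∘ Sn` to the "double-speed" map `μ`
  have hf₁ : Continuous (fun p : (X × I) × I =>
      Susp.mk x₀ (n p.1.1).1.1 (toI ((1 + (p.2 : ℝ)) * (p.1.2 : ℝ)))) :=
    Susp.continuous_mk (by fun_prop) (toI_continuous.comp (by fun_prop))
  have hf₂ : Continuous (fun p : (X × I) × I =>
      Susp.mk x₀ (n p.1.1).1.2 (toI ((1 + (p.2 : ℝ)) * (p.1.2 : ℝ) - (p.2 : ℝ)))) :=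
    Susp.continuous_mk (by fun_prop) (toI_continuous.comp (by fun_prop))
  have hcondA : ∀ p : (X × I) × I,
      Susp.mk x₀ (n p.1.1).1.1 (toI ((1 + (p.2 : ℝ)) * (p.1.2 : ℝ))) = Susp.pt x₀ ∨
      Susp.mk x₀ (n p.1.1).1.2 (toI ((1 + (p.2 : ℝ)) * (p.1.2 : ℝ) - (p.2 : ℝ)))
        = Susp.pt x₀ := by
    intro p
    refine (n p.1.1).2.imp (fun h => ?_) (fun h => ?_) <;> rw [h] <;> exact Susp.base_eq _
  set kA := wedgeMkC x₀ hf₁ hf₂ hcondA with hkAdef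
  have hkA : ∀ (p q : X × I) (s : I), SuspRel X x₀ p q → kA (p, s) = kA (q, s) := by
    intro p q s r
    apply Subtype.ext
    cases r with
    | zero x y =>
        apply Prod.ext
        · exact (hz _ _ (by rw [c0, mul_zero])).trans (hz _ _ (by rw [c0, mul_zero])).symm
        · refine (hz _ _ ?_).trans (hz _ _ ?_).symm <;> rw [c0, mul_zero, zero_sub] <;>
            exact neg_nonpos.mpr s.2.1
    | one x y =>
        apply Prod.ext
        · refine (ho _ _ ?_).trans (ho _ _ ?_).symm <;> rw [c1, mul_one] <;>
            linarith [s.2.1]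
        · refine (ho _ _ ?_).trans (ho _ _ ?_).symm <;> rw [c1, mul_one] <;>
            linarith [s.2.1]
    | base t =>
        apply Prod.ext
        · exact (by rw [hn1x₀]; exact Susp.base_eq _ :
              Susp.mk x₀ (n x₀).1.1 _ = Susp.pt x₀).trans
            (by rw [hn1x₀]; exact Susp.base_eq _ :
              Susp.mk x₀ (n x₀).1.1 _ = Susp.pt x₀).symm
        · exact (by rw [hn2x₀]; exact Susp.base_eq _ :
              Susp.mk x₀ (n x₀).1.2 _ = Susp.pt x₀).trans
            (by rw [hn2x₀]; exact Susp.base_eq _ :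
              Susp.mk x₀ (n x₀).1.2 _ = Susp.pt x₀).symm
  -- the middle map μ
  have hg₁ : Continuous (fun p : X × I => Susp.mk x₀ (n p.1).1.1 (toI (2 * (p.2 : ℝ)))) :=
    Susp.continuous_mk (by fun_prop) (toI_continuous.comp (by fun_prop))
  have hg₂ : Continuous (fun p : X × I =>
      Susp.mk x₀ (n p.1).1.2 (toI (2 * (p.2 : ℝ) - 1))) :=
    Susp.continuous_mk (by fun_prop) (toI_continuous.comp (by fun_prop))
  have hcondM : ∀ p : X × I,
      Susp.mk x₀ (n p.1).1.1 (toI (2 * (p.2 : ℝ))) = Susp.pt x₀ ∨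
      Susp.mk x₀ (n p.1).1.2 (toI (2 * (p.2 : ℝ) - 1)) = Susp.pt x₀ := by
    intro p
    rcases le_or_gt (p.2 : ℝ) (1 / 2) with h | h
    · exact Or.inr (hz _ _ (by linarith))
    · exact Or.inl (ho _ _ (by linarith))
  set kM := wedgeMkC x₀ hg₁ hg₂ hcondM with hkMdef
  have hrelM : ∀ (p q : X × I), SuspRel X x₀ p q → kM p = kM q := by
    intro p q r
    apply Subtype.ext
    cases r with
    | zero x y =>
        apply Prod.ext
        · exact (hz _ _ (by rw [c0, mul_zero])).trans (hz _ _ (by rw [c0, mul_zero])).symm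
        · refine (hz _ _ ?_).trans (hz _ _ ?_).symm <;> rw [c0] <;> norm_num
    | one x y =>
        apply Prod.ext
        · refine (ho _ _ ?_).trans (ho _ _ ?_).symm <;> rw [c1] <;> norm_num
        · refine (ho _ _ ?_).trans (ho _ _ ?_).symm <;> rw [c1] <;> norm_num
    | base t =>
        apply Prod.ext
        · exact (by rw [hn1x₀]; exact Susp.base_eq _ :
              Susp.mk x₀ (n x₀).1.1 _ = Susp.pt x₀).trans
            (by rw [hn1x₀]; exact Susp.base_eq _ :
              Susp.mk x₀ (n x₀).1.1 _ = Susp.pt x₀).symm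
        · exact (by rw [hn2x₀]; exact Susp.base_eq _ :
              Susp.mk x₀ (n x₀).1.2 _ = Susp.pt x₀).trans
            (by rw [hn2x₀]; exact Susp.base_eq _ :
              Susp.mk x₀ (n x₀).1.2 _ = Susp.pt x₀).symm
  let μmap : C(Susp X x₀, Wedge (Susp X x₀) (Susp X x₀) (Susp.pt x₀) (Susp.pt x₀)) :=
    ⟨Quot.lift kM hrelM, continuous_quot_lift _ kM.continuous⟩
  have hμ : ∀ (x : X) (t : I), μmap (Susp.mk x₀ x t) = kM (x, t) := fun _ _ => rfl
  -- homotopy A : lam ∘ Sn ≃ μ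
  let A : (lam.comp Sn).HomotopyRel μmap {Susp.pt x₀} :=
    { toContinuousMap := suspHomotopyMap x₀ kA hkA
      map_zero_left := by
        intro z
        induction z using Susp.ind with
        | h x t =>
        show (suspHomotopyMap x₀ kA hkA) (0, Susp.mk x₀ x t) = (lam.comp Sn) (Susp.mk x₀ x t)
        rw [suspHomotopyMap_apply]
        rcases (n x).2 with h | h
        · rw [hcase2 x t h]
          apply Subtype.ext
          apply Prod.ext
          · show Susp.mk x₀ (n x).1.1 (toI ((1 + ((0 : I) : ℝ)) * (t : ℝ))) = Susp.pt x₀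
            rw [h]; exact Susp.base_eq _
          · show Susp.mk x₀ (n x).1.2 (toI ((1 + ((0 : I) : ℝ)) * (t : ℝ) - ((0 : I) : ℝ)))
              = Susp.mk x₀ (n x).1.2 t
            rw [show (1 + ((0 : I) : ℝ)) * (t : ℝ) - ((0 : I) : ℝ) = (t : ℝ) by
              rw [c0]; ring, toI_coe]
        · rw [hcase1 x t h]
          apply Subtype.ext
          apply Prod.ext
          · show Susp.mk x₀ (n x).1.1 (toI ((1 + ((0 : I) : ℝ)) * (t : ℝ)))
              = Susp.mk x₀ (n x).1.1 t
            rw [show (1 + ((0 : I) : ℝ)) * (t : ℝ) = (t : ℝ) by rw [c0]; ring, toI_coe]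
          · show Susp.mk x₀ (n x).1.2 (toI ((1 + ((0 : I) : ℝ)) * (t : ℝ) - ((0 : I) : ℝ)))
              = Susp.pt x₀
            rw [h]; exact Susp.base_eq _
      map_one_left := by
        intro z
        induction z using Susp.ind with
        | h x t =>
        show (suspHomotopyMap x₀ kA hkA) (1, Susp.mk x₀ x t) = μmap (Susp.mk x₀ x t)
        rw [suspHomotopyMap_apply, hμ]
        apply Subtype.ext
        apply Prod.ext
        · show Susp.mk x₀ (n x).1.1 (toI ((1 + ((1 : I) : ℝ)) * (t : ℝ)))
            = Susp.mk x₀ (n x).1.1 (toI (2 * (t : ℝ)))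
          rw [show (1 + ((1 : I) : ℝ)) * (t : ℝ) = 2 * (t : ℝ) by rw [c1]; ring]
        · show Susp.mk x₀ (n x).1.2 (toI ((1 + ((1 : I) : ℝ)) * (t : ℝ) - ((1 : I) : ℝ)))
            = Susp.mk x₀ (n x).1.2 (toI (2 * (t : ℝ) - 1))
          rw [show (1 + ((1 : I) : ℝ)) * (t : ℝ) - ((1 : I) : ℝ) = 2 * (t : ℝ) - 1 by
            rw [c1]; ring]
      prop' := by
        intro s z hz'
        simp only [Set.mem_singleton_iff] at hz'
        subst hz'
        show (suspHomotopyMap x₀ kA hkA) (s, Susp.pt x₀) = (lam.comp Sn) (Susp.pt x₀)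
        have l1 : (suspHomotopyMap x₀ kA hkA) (s, Susp.pt x₀) = kA ((x₀, 0), s) :=
          suspHomotopyMap_apply x₀ kA hkA s x₀ 0
        have r1 : (lam.comp Sn) (Susp.pt x₀) = Wedge.inl (Susp.mk x₀ (n x₀).1.1 0) :=
          hcase1 x₀ 0 hn2x₀
        rw [l1, r1]
        apply Subtype.ext
        apply Prod.ext
        · show Susp.mk x₀ (n x₀).1.1 (toI ((1 + (s : ℝ)) * ((0 : I) : ℝ)))
            = Susp.mk x₀ (n x₀).1.1 0
          rw [hn1x₀]
          exact Susp.base_eq _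
        · show Susp.mk x₀ (n x₀).1.2 (toI ((1 + (s : ℝ)) * ((0 : I) : ℝ) - (s : ℝ)))
            = Susp.pt x₀
          rw [hn2x₀]
          exact Susp.base_eq _ }
  -- homotopy B : μ ≃ ν
  have hb₁ : Continuous (fun p : (X × I) × I =>
      Susp.mk x₀ (H₁ (p.2, p.1.1)) (toI (2 * (p.1.2 : ℝ)))) :=
    Susp.continuous_mk (H₁.continuous.comp (by fun_prop)) (toI_continuous.comp (by fun_prop))
  have hb₂ : Continuous (fun p : (X × I) × I =>
      Susp.mk x₀ (H₂ (p.2, p.1.1)) (toI (2 * (p.1.2 : ℝ) - 1))) :=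
    Susp.continuous_mk (H₂.continuous.comp (by fun_prop)) (toI_continuous.comp (by fun_prop))
  have hcondB : ∀ p : (X × I) × I,
      Susp.mk x₀ (H₁ (p.2, p.1.1)) (toI (2 * (p.1.2 : ℝ))) = Susp.pt x₀ ∨
      Susp.mk x₀ (H₂ (p.2, p.1.1)) (toI (2 * (p.1.2 : ℝ) - 1)) = Susp.pt x₀ := by
    intro p
    rcases le_or_gt (p.1.2 : ℝ) (1 / 2) with h | h
    · exact Or.inr (hz _ _ (by linarith))
    · exact Or.inl (ho _ _ (by linarith))
  set kB := wedgeMkC x₀ hb₁ hb₂ hcondB with hkBdef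
  have hkB : ∀ (p q : X × I) (s : I), SuspRel X x₀ p q → kB (p, s) = kB (q, s) := by
    intro p q s r
    apply Subtype.ext
    cases r with
    | zero x y =>
        apply Prod.ext
        · exact (hz _ _ (by rw [c0, mul_zero])).trans (hz _ _ (by rw [c0, mul_zero])).symm
        · refine (hz _ _ ?_).trans (hz _ _ ?_).symm <;> rw [c0] <;> norm_num
    | one x y =>
        apply Prod.ext
        · refine (ho _ _ ?_).trans (ho _ _ ?_).symm <;> rw [c1] <;> norm_num
        · refine (ho _ _ ?_).trans (ho _ _ ?_).symm <;> rw [c1] <;> norm_num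
    | base t =>
        apply Prod.ext
        · exact (by rw [hH1 s]; exact Susp.base_eq _ :
              Susp.mk x₀ (H₁ (s, x₀)) _ = Susp.pt x₀).trans
            (by rw [hH1 s]; exact Susp.base_eq _ :
              Susp.mk x₀ (H₁ (s, x₀)) _ = Susp.pt x₀).symm
        · exact (by rw [hH2 s]; exact Susp.base_eq _ :
              Susp.mk x₀ (H₂ (s, x₀)) _ = Susp.pt x₀).trans
            (by rw [hH2 s]; exact Susp.base_eq _ :
              Susp.mk x₀ (H₂ (s, x₀)) _ = Susp.pt x₀).symm
  let B : μmap.HomotopyRel ν {Susp.pt x₀} :=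
    { toContinuousMap := suspHomotopyMap x₀ kB hkB
      map_zero_left := by
        intro z
        induction z using Susp.ind with
        | h x t =>
        show (suspHomotopyMap x₀ kB hkB) (0, Susp.mk x₀ x t) = μmap (Susp.mk x₀ x t)
        rw [suspHomotopyMap_apply, hμ]
        apply Subtype.ext
        apply Prod.ext
        · show Susp.mk x₀ (H₁ (0, x)) (toI (2 * (t : ℝ)))
            = Susp.mk x₀ (n x).1.1 (toI (2 * (t : ℝ)))
          rw [H₁.apply_zero]
          rfl
        · show Susp.mk x₀ (H₂ (0, x)) (toI (2 * (t : ℝ) - 1))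
            = Susp.mk x₀ (n x).1.2 (toI (2 * (t : ℝ) - 1))
          rw [H₂.apply_zero]
          rfl
      map_one_left := by
        intro z
        induction z using Susp.ind with
        | h x t =>
        show (suspHomotopyMap x₀ kB hkB) (1, Susp.mk x₀ x t) = ν (Susp.mk x₀ x t)
        rw [suspHomotopyMap_apply, hν x t]
        by_cases ht : (t : ℝ) ≤ 1 / 2
        · rw [if_pos ht]
          apply Subtype.ext
          apply Prod.ext
          · show Susp.mk x₀ (H₁ (1, x)) (toI (2 * (t : ℝ)))
              = Susp.mk x₀ x (toI (2 * (t : ℝ)))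
            rw [H₁.apply_one]
            rfl
          · show Susp.mk x₀ (H₂ (1, x)) (toI (2 * (t : ℝ) - 1)) = Susp.pt x₀
            exact hz _ _ (by linarith)
        · rw [if_neg ht]
          apply Subtype.ext
          apply Prod.ext
          · show Susp.mk x₀ (H₁ (1, x)) (toI (2 * (t : ℝ))) = Susp.pt x₀
            exact ho _ _ (by linarith)
          · show Susp.mk x₀ (H₂ (1, x)) (toI (2 * (t : ℝ) - 1))
              = Susp.mk x₀ x (toI (2 * (t : ℝ) - 1))
            rw [H₂.apply_one]
            rfl
      prop' := by
        intro s z hz'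
        simp only [Set.mem_singleton_iff] at hz'
        subst hz'
        show (suspHomotopyMap x₀ kB hkB) (s, Susp.pt x₀) = μmap (Susp.pt x₀)
        have l1 : (suspHomotopyMap x₀ kB hkB) (s, Susp.pt x₀) = kB ((x₀, 0), s) :=
          suspHomotopyMap_apply x₀ kB hkB s x₀ 0
        have r1 : μmap (Susp.pt x₀) = kM (x₀, 0) := rfl
        rw [l1, r1]
        apply Subtype.ext
        apply Prod.ext
        · exact (by rw [hH1 s]; exact Susp.base_eq _ :
              Susp.mk x₀ (H₁ (s, x₀)) _ = Susp.pt x₀).trans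
            (by rw [hn1x₀]; exact Susp.base_eq _ :
              Susp.mk x₀ (n x₀).1.1 _ = Susp.pt x₀).symm
        · exact (by rw [hH2 s]; exact Susp.base_eq _ :
              Susp.mk x₀ (H₂ (s, x₀)) _ = Susp.pt x₀).trans
            (by rw [hn2x₀]; exact Susp.base_eq _ :
              Susp.mk x₀ (n x₀).1.2 _ = Susp.pt x₀).symm }
  exact ⟨A.trans B⟩

/-- If `n`, `n'` are two comultiplications on `X`, then
`λ' ∘ (Σn) ≃ ν ≃ λ' ∘ (Σn') : ΣX → ΣX ∨ ΣX` (based homotopies), where `ν` is the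
pinch comultiplication on `ΣX` and `λ' : Σ(X ∨ X) → ΣX ∨ ΣX` is the canonical
homeomorphism; hence `Σn ≃ Σn'`.  The maps `Σn`, `Σn'`, `λ'` and `ν` are
characterized by their pointwise formulas. -/
theorem susp_comultiplications_agree {X : Type*} [TopologicalSpace X] (x₀ : X)
    (n : C(X, Wedge X X x₀ x₀)) (hn : IsComul x₀ n)
    (n' : C(X, Wedge X X x₀ x₀)) (hn' : IsComul x₀ n')
    (Sn : C(Susp X x₀, Susp (Wedge X X x₀ x₀) Wedge.pt))
    (hSn : ∀ (x : X) (t : I), Sn (Susp.mk x₀ x t) = Susp.mk Wedge.pt (n x) t)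
    (Sn' : C(Susp X x₀, Susp (Wedge X X x₀ x₀) Wedge.pt))
    (hSn' : ∀ (x : X) (t : I), Sn' (Susp.mk x₀ x t) = Susp.mk Wedge.pt (n' x) t)
    (lam : C(Susp (Wedge X X x₀ x₀) Wedge.pt,
      Wedge (Susp X x₀) (Susp X x₀) (Susp.pt x₀) (Susp.pt x₀)))
    (hlam₁ : ∀ (x : X) (t : I),
      lam (Susp.mk Wedge.pt (Wedge.inl x) t) = Wedge.inl (Susp.mk x₀ x t))
    (hlam₂ : ∀ (x : X) (t : I),
      lam (Susp.mk Wedge.pt (Wedge.inr x) t) = Wedge.inr (Susp.mk x₀ x t))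
    (ν : C(Susp X x₀, Wedge (Susp X x₀) (Susp X x₀) (Susp.pt x₀) (Susp.pt x₀)))
    (hν : ∀ (x : X) (t : I), ν (Susp.mk x₀ x t) =
      if (t : ℝ) ≤ 1 / 2 then Wedge.inl (Susp.mk x₀ x (toI (2 * (t : ℝ))))
      else Wedge.inr (Susp.mk x₀ x (toI (2 * (t : ℝ) - 1)))) :
    (lam.comp Sn).HomotopicRel ν {Susp.pt x₀} ∧
    (lam.comp Sn').HomotopicRel ν {Susp.pt x₀} ∧
    Sn.HomotopicRel Sn' {Susp.pt x₀} := by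
  have h1 := comul_susp_homotopy x₀ n hn Sn hSn lam hlam₁ hlam₂ ν hν
  have h2 := comul_susp_homotopy x₀ n' hn' Sn' hSn' lam hlam₁ hlam₂ ν hν
  refine ⟨h1, h2, ?_⟩
  obtain ⟨F⟩ := h1
  obtain ⟨F'⟩ := h2
  have e : (rho x₀).comp (lam.comp Sn) = Sn := by
    ext z
    induction z using Susp.ind with
    | h x t =>
    show rho x₀ (lam (Sn (Susp.mk x₀ x t))) = Sn (Susp.mk x₀ x t)
    rw [hSn]
    rcases (n x).2 with h | h
    · have hw : n x = Wedge.inr (n x).1.2 := Wedge.eq_inr _ h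
      rw [hw, hlam₂, rho_inr, Si2_mk]
    · have hw : n x = Wedge.inl (n x).1.1 := Wedge.eq_inl _ h
      rw [hw, hlam₁, rho_inl, Si1_mk]
  have e' : (rho x₀).comp (lam.comp Sn') = Sn' := by
    ext z
    induction z using Susp.ind with
    | h x t =>
    show rho x₀ (lam (Sn' (Susp.mk x₀ x t))) = Sn' (Susp.mk x₀ x t)
    rw [hSn']
    rcases (n' x).2 with h | h
    · have hw : n' x = Wedge.inr (n' x).1.2 := Wedge.eq_inr _ h
      rw [hw, hlam₂, rho_inr, Si2_mk]
    · have hw : n' x = Wedge.inl (n' x).1.1 := Wedge.eq_inl _ h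
      rw [hw, hlam₁, rho_inl, Si1_mk]
  have G := F.compContinuousMap (rho x₀)
  have G' := F'.compContinuousMap (rho x₀)
  exact ⟨(G.cast e rfl).trans ((G'.cast e' rfl).symm)⟩
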